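/- Let u > 0, 0 ≤ v < min(1,u) and κ > 0. Then the series ∑_{k≥1} κ^k μ_k(u,v) converges; moreover ∑_{k=1}^∞ κ^k μ_k(u,v) ≤ κ if 0 < u ≤ 1, and ∑_{k=1}^∞ κ^k μ_k(u,v) ≤ (1+u)^κ if u > 1. -/

import Mathlib

/-!
For `u ≤ 1` every region `V_k(u,v)` is empty, so only `μ_1(u,v) ≤ 1` contributes.
For `u > 1`, forgetting the constraints on `t_1 + ⋯ + t_k` and integrating `t_k` over `(0,1)`
bounds `u μ_k(u,v)` by the integral of `f_{k-1}(u; ·)` over the open simplex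
`{t > 0, t_1 + ⋯ + t_{k-1} < u - 1}`. Integrating out `t_1` first turns this into a recursion
in `k`, solved by
`∫_0^c (a-x)⁻¹ log((a-x)/(a-c))^m / m! dx = log(a/(a-c))^(m+1) / (m+1)!`.
Hence `u μ_k(u,v) ≤ (log u)^(k-1) / (k-1)!`, and `∑ κ^k μ_k(u,v)` is at most
`κ u⁻¹ e^(κ log u) = κ u^(κ-1) ≤ (1+u)^κ`.
-/

open MeasureTheory

/-- The region `V_k(u,v)`. -/
def Vk (k : ℕ) (u v : ℝ) : Set (Fin k → ℝ) :=
  {t | (∀ i, t i ∈ Set.Ioo (0:ℝ) 1) ∧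
    (∑ i ∈ Finset.univ.filter (fun i : Fin k => (i : ℕ) < k - 1), t i) < u - 1 ∧
    u - 1 < ∑ i, t i ∧ ∑ i, t i < u - v}

/-- The function `μ_k(u,v)`. -/
noncomputable def muk (k : ℕ) (u v : ℝ) : ℝ :=
  if k = 1 then
    u⁻¹ * (volume (Set.Ioo (0:ℝ) 1 ∩ Set.Ioo (u-1) (u-v))).toReal
  else
    u⁻¹ * ∫ t in Vk k u v,
      ∏ j ∈ Finset.univ.filter (fun j : Fin k => (j : ℕ) < k - 1),
        (u - ∑ i ∈ Finset.univ.filter (fun i : Fin k => i ≤ j), t i)⁻¹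

/-- `μ^{(κ)}(u,v) = ∑_{k ≥ 1} κ^k μ_k(u,v)`. -/
noncomputable def mukappa (κ u v : ℝ) : ℝ := ∑' k : ℕ, κ ^ (k+1) * muk (k+1) u v

open Finset Real
open scoped ENNReal Nat

theorem Fin.sum_Iic_succ_cons {M : Type*} [AddCommMonoid M] {m : ℕ} (x : M) (s : Fin m → M)
    (j : Fin m) :
    ∑ i ≤ j.succ, (Fin.cons x s : Fin (m + 1) → M) i = x + ∑ i ≤ j, s i := by
  rw [← filter_ge_eq_Iic, ← filter_ge_eq_Iic, sum_filter, sum_filter, Fin.sum_univ_succ]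
  simp [Fin.succ_le_succ_iff]

theorem Fin.sum_filter_lt_last_snoc {M : Type*} [AddCommMonoid M] {n : ℕ} (s : Fin n → M)
    (x : M) :
    ∑ i ∈ univ.filter (fun i : Fin (n + 1) => (i : ℕ) < n + 1 - 1),
      (Fin.snoc s x : Fin (n + 1) → M) i = ∑ i, s i := by
  simp [sum_filter, Fin.sum_univ_castSucc]

theorem lintegral_le_lintegral_insertNth {α : Type*} [MeasureSpace α]
    [SigmaFinite (volume : Measure α)] {n : ℕ} (i : Fin (n + 1))
    (f : (Fin (n + 1) → α) → ℝ≥0∞) :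
    ∫⁻ t, f t ≤ ∫⁻ x, ∫⁻ s, f (i.insertNth x s) := by
  have e := (volume_preserving_piFinSuccAbove (fun _ : Fin (n + 1) => α) i).symm
  rw [← e.lintegral_comp_emb (MeasurableEquiv.measurableEmbedding _), Measure.volume_eq_prod]
  exact lintegral_prod_le _

theorem lintegral_le_lintegral_cons {α : Type*} [MeasureSpace α]
    [SigmaFinite (volume : Measure α)] {n : ℕ} (f : (Fin (n + 1) → α) → ℝ≥0∞) :
    ∫⁻ t, f t ≤ ∫⁻ x, ∫⁻ s, f (Fin.cons x s) := by
  simpa [Fin.insertNth_zero'] using lintegral_le_lintegral_insertNth 0 f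

theorem lintegral_le_lintegral_snoc {α : Type*} [MeasureSpace α]
    [SigmaFinite (volume : Measure α)] {n : ℕ} (f : (Fin (n + 1) → α) → ℝ≥0∞) :
    ∫⁻ t, f t ≤ ∫⁻ x, ∫⁻ s, f (Fin.snoc s x) := by
  simpa [Fin.insertNth_last'] using lintegral_le_lintegral_insertNth (Fin.last n) f

theorem integral_inv_mul_log_sub_pow (m : ℕ) {a c : ℝ} (hc : 0 ≤ c) (hca : c < a) :
    ∫ x in 0..c, (a - x)⁻¹ * ((log (a - x) - log (a - c)) ^ m / m !) =
      (log a - log (a - c)) ^ (m + 1) / (m + 1)! := by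
  have hpos : ∀ x ∈ Set.Icc 0 c, a - x ≠ 0 := fun x hx => by linarith [hx.2]
  have hderiv : ∀ x ∈ Set.uIcc 0 c, HasDerivAt
      (fun y => -(log (a - y) - log (a - c)) ^ (m + 1) / (m + 1)!)
      ((a - x)⁻¹ * ((log (a - x) - log (a - c)) ^ m / m !)) x := by
    intro x hx
    rw [Set.uIcc_of_le hc] at hx
    have hlog := (((hasDerivAt_id' x).const_sub a).log (hpos x hx)).sub_const (log (a - c))
    refine ((hlog.pow (m + 1)).neg.div_const ((m + 1)! : ℝ)).congr_deriv ?_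
    have := hpos x hx
    rw [Nat.factorial_succ]
    push_cast
    field_simp
  have hcont : ContinuousOn (fun x => (a - x)⁻¹ * ((log (a - x) - log (a - c)) ^ m / m !))
      (Set.uIcc 0 c) := by
    rw [Set.uIcc_of_le hc]
    fun_prop (disch := assumption)
  rw [intervalIntegral.integral_eq_sub_of_hasDerivAt hderiv (hcont.intervalIntegrable)]
  simp [zero_pow (Nat.succ_ne_zero m)]
  ring

theorem setLIntegral_Ioo_inv_mul_log_sub_pow (m : ℕ) {a c : ℝ} (hc : 0 ≤ c) (hca : c < a) :
    ∫⁻ x in Set.Ioo 0 c,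
        ENNReal.ofReal ((a - x)⁻¹ * ((log (a - x) - log (a - c)) ^ m / m !)) =
      ENNReal.ofReal ((log a - log (a - c)) ^ (m + 1) / (m + 1)!) := by
  have hpos : ∀ x ∈ Set.Icc 0 c, a - x ≠ 0 := fun x hx => by linarith [hx.2]
  have hcont : ContinuousOn (fun x => (a - x)⁻¹ * ((log (a - x) - log (a - c)) ^ m / m !))
      (Set.Icc 0 c) := by
    fun_prop (disch := assumption)
  have hnonneg :
      ∀ x ∈ Set.Ioo 0 c, 0 ≤ (a - x)⁻¹ * ((log (a - x) - log (a - c)) ^ m / m !) := by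
    intro x hx
    have hlog : log (a - c) ≤ log (a - x) := log_le_log (by linarith) (by linarith [hx.2])
    have : 0 ≤ a - x := by linarith [hx.2]
    have : 0 ≤ log (a - x) - log (a - c) := by linarith
    positivity
  rw [← ofReal_integral_eq_lintegral_ofReal
      (hcont.integrableOn_Icc.mono_set Set.Ioo_subset_Icc_self)
      ((ae_restrict_iff' measurableSet_Ioo).2 (Filter.Eventually.of_forall hnonneg)),
    ← integral_Ioc_eq_integral_Ioo, ← intervalIntegral.integral_of_le hc,
    integral_inv_mul_log_sub_pow m hc hca]

def openSimplex (m : ℕ) (c : ℝ) : Set (Fin m → ℝ) :=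
  {t | (∀ i, 0 < t i) ∧ ∑ i, t i < c}

theorem measurableSet_openSimplex (m : ℕ) (c : ℝ) : MeasurableSet (openSimplex m c) := by
  unfold openSimplex; measurability

theorem cons_mem_openSimplex_iff {m : ℕ} {c x : ℝ} {s : Fin m → ℝ} :
    (Fin.cons x s : Fin (m + 1) → ℝ) ∈ openSimplex (m + 1) c ↔
      x ∈ Set.Ioo 0 c ∧ s ∈ openSimplex m (c - x) := by
  simp only [openSimplex, Set.mem_ofPred_eq, Fin.forall_fin_succ, Fin.cons_zero, Fin.cons_succ,
    Fin.sum_univ_succ, Set.mem_Ioo]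
  constructor
  · rintro ⟨⟨hx, hs⟩, hsum⟩
    have := sum_nonneg fun i (_ : i ∈ univ) => (hs i).le
    exact ⟨⟨hx, by linarith⟩, hs, by linarith⟩
  · rintro ⟨⟨hx, -⟩, hs, hsum⟩
    exact ⟨⟨hx, hs⟩, by linarith⟩

/-- The paper's `f_m(a; t)`. -/
noncomputable def prodInvSubPartialSums {m : ℕ} (a : ℝ) (t : Fin m → ℝ) : ℝ :=
  ∏ j, (a - ∑ i ≤ j, t i)⁻¹

theorem measurable_prodInvSubPartialSums (m : ℕ) (a : ℝ) :
    Measurable (prodInvSubPartialSums (m := m) a) := by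
  unfold prodInvSubPartialSums; fun_prop

theorem prodInvSubPartialSums_cons {m : ℕ} (a x : ℝ) (s : Fin m → ℝ) :
    prodInvSubPartialSums a (Fin.cons x s : Fin (m + 1) → ℝ) =
      (a - x)⁻¹ * prodInvSubPartialSums (a - x) s := by
  rw [prodInvSubPartialSums, Fin.prod_univ_succ, show Iic (0 : Fin (m + 1)) = {0} by ext; simp]
  simp [prodInvSubPartialSums, Fin.sum_Iic_succ_cons, sub_sub]

theorem prodInvSubPartialSums_nonneg {m : ℕ} {a c : ℝ} {s : Fin m → ℝ}
    (hs : s ∈ openSimplex m c) (hca : c ≤ a) : 0 ≤ prodInvSubPartialSums a s := by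
  refine prod_nonneg fun j _ => inv_nonneg.2 ?_
  have : ∑ i ≤ j, s i ≤ ∑ i, s i :=
    sum_le_sum_of_subset_of_nonneg (subset_univ _) fun i _ _ => (hs.1 i).le
  linarith [hs.2]

theorem setLIntegral_openSimplex_succ_le (m : ℕ) {a c : ℝ} (hca : c ≤ a) :
    ∫⁻ t in openSimplex (m + 1) c, ENNReal.ofReal (prodInvSubPartialSums a t) ≤
      ∫⁻ x in Set.Ioo 0 c, ENNReal.ofReal (a - x)⁻¹ *
        ∫⁻ s in openSimplex m (c - x), ENNReal.ofReal (prodInvSubPartialSums (a - x) s) := by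
  rw [← lintegral_indicator (measurableSet_openSimplex _ _),
    ← lintegral_indicator measurableSet_Ioo]
  refine (lintegral_le_lintegral_cons _).trans_eq (lintegral_congr fun x => ?_)
  by_cases hx : x ∈ Set.Ioo 0 c
  · rw [Set.indicator_of_mem hx, ← lintegral_const_mul' _ _ ENNReal.ofReal_ne_top,
      ← lintegral_indicator (measurableSet_openSimplex _ _)]
    refine lintegral_congr fun s => ?_
    by_cases hs : s ∈ openSimplex m (c - x)
    · rw [Set.indicator_of_mem (cons_mem_openSimplex_iff.2 ⟨hx, hs⟩), Set.indicator_of_mem hs,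
        prodInvSubPartialSums_cons, ENNReal.ofReal_mul (inv_nonneg.2 (by linarith [hx.2]))]
    · rw [Set.indicator_of_notMem (fun h => hs (cons_mem_openSimplex_iff.1 h).2),
        Set.indicator_of_notMem hs]
  · have hxs : ∀ s, Fin.cons x s ∉ openSimplex (m + 1) c :=
      fun s h => hx (cons_mem_openSimplex_iff.1 h).1
    simp [hx, hxs]

theorem setLIntegral_openSimplex_le (m : ℕ) {a c : ℝ} (hc : 0 ≤ c) (hca : c < a) :
    ∫⁻ t in openSimplex m c, ENNReal.ofReal (prodInvSubPartialSums a t) ≤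
      ENNReal.ofReal ((log a - log (a - c)) ^ m / m !) := by
  induction m generalizing a c with
  | zero =>
    calc _ ≤ ∫⁻ t : Fin 0 → ℝ, 1 :=
          (setLIntegral_le_lintegral _ _).trans_eq (by simp [prodInvSubPartialSums])
      _ = _ := by simp [volume_pi]
  | succ m ih =>
    have hstep : ∀ x ∈ Set.Ioo 0 c, ENNReal.ofReal (a - x)⁻¹ *
        ∫⁻ s in openSimplex m (c - x), ENNReal.ofReal (prodInvSubPartialSums (a - x) s) ≤
        ENNReal.ofReal ((a - x)⁻¹ * ((log (a - x) - log (a - c)) ^ m / m !)) := by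
      intro x hx
      have h := ih (a := a - x) (c := c - x) (by linarith [hx.2]) (by linarith)
      rw [sub_sub_sub_cancel_right] at h
      rw [ENNReal.ofReal_mul (inv_nonneg.2 (by linarith [hx.2]))]
      gcongr
    calc _ ≤ _ := setLIntegral_openSimplex_succ_le m hca.le
      _ ≤ _ := setLIntegral_mono' measurableSet_Ioo hstep
      _ = _ := setLIntegral_Ioo_inv_mul_log_sub_pow m hc hca

noncomputable def mukIntegrand (k : ℕ) (u : ℝ) (t : Fin k → ℝ) : ℝ :=
  ∏ j ∈ univ.filter (fun j : Fin k => (j : ℕ) < k - 1),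
    (u - ∑ i ∈ univ.filter (fun i : Fin k => i ≤ j), t i)⁻¹

theorem muk_of_ne_one {k : ℕ} (hk : k ≠ 1) (u v : ℝ) :
    muk k u v = u⁻¹ * ∫ t in Vk k u v, mukIntegrand k u t :=
  if_neg hk

theorem mukIntegrand_snoc {n : ℕ} (u x : ℝ) (s : Fin n → ℝ) :
    mukIntegrand (n + 1) u (Fin.snoc s x) = prodInvSubPartialSums u s := by
  simp [mukIntegrand, prodInvSubPartialSums, prod_filter, Fin.prod_univ_castSucc,
    filter_ge_eq_Iic, Fin.sum_Iic_castSucc]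

theorem measurableSet_Vk (k : ℕ) (u v : ℝ) : MeasurableSet (Vk k u v) := by
  unfold Vk; measurability

theorem snoc_mem_Vk {n : ℕ} {u v x : ℝ} {s : Fin n → ℝ}
    (h : Fin.snoc s x ∈ Vk (n + 1) u v) :
    x ∈ Set.Ioo 0 1 ∧ s ∈ openSimplex n (u - 1) := by
  obtain ⟨hIoo, hsum, -⟩ := h
  refine ⟨by simpa using hIoo (Fin.last n), fun i => by simpa using (hIoo i.castSucc).1, ?_⟩
  rwa [Fin.sum_filter_lt_last_snoc] at hsum

theorem indicator_Vk_snoc_le {n : ℕ} {u v x : ℝ} {s : Fin n → ℝ} :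
    (Vk (n + 1) u v).indicator (fun t => ENNReal.ofReal ‖mukIntegrand (n + 1) u t‖)
        (Fin.snoc s x) ≤
      (Set.Ioo 0 1).indicator 1 x *
        (openSimplex n (u - 1)).indicator
          (fun s => ENNReal.ofReal (prodInvSubPartialSums u s)) s := by
  by_cases h : Fin.snoc s x ∈ Vk (n + 1) u v
  · obtain ⟨hx, hs⟩ := snoc_mem_Vk h
    rw [Set.indicator_of_mem h, Set.indicator_of_mem hx, Set.indicator_of_mem hs,
      mukIntegrand_snoc, Real.norm_of_nonneg (prodInvSubPartialSums_nonneg hs (sub_one_lt u).le),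
      Pi.one_apply, one_mul]
  · rw [Set.indicator_of_notMem h]
    exact zero_le

theorem setLIntegral_norm_mukIntegrand_le {n : ℕ} {u : ℝ} (hu : 1 < u) (v : ℝ) :
    ∫⁻ t in Vk (n + 1) u v, ENNReal.ofReal ‖mukIntegrand (n + 1) u t‖ ≤
      ENNReal.ofReal (log u ^ n / n !) := by
  calc ∫⁻ t in Vk (n + 1) u v, ENNReal.ofReal ‖mukIntegrand (n + 1) u t‖
      ≤ ∫⁻ x : ℝ, ∫⁻ s, (Set.Ioo 0 1).indicator 1 x *
          (openSimplex n (u - 1)).indicator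
            (fun s => ENNReal.ofReal (prodInvSubPartialSums u s)) s := by
        rw [← lintegral_indicator (measurableSet_Vk _ _ _)]
        exact (lintegral_le_lintegral_snoc _).trans
          (lintegral_mono fun x => lintegral_mono fun s => indicator_Vk_snoc_le)
    _ = ∫⁻ s in openSimplex n (u - 1), ENNReal.ofReal (prodInvSubPartialSums u s) := by
        rw [lintegral_lintegral_mul (measurable_one.indicator measurableSet_Ioo).aemeasurable
            (((measurable_prodInvSubPartialSums n u).ennreal_ofReal).indicator
              (measurableSet_openSimplex _ _)).aemeasurable,
          lintegral_indicator_one measurableSet_Ioo,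
          lintegral_indicator (measurableSet_openSimplex _ _)]
        simp
    _ ≤ _ := by
        simpa using setLIntegral_openSimplex_le n (sub_nonneg.2 hu.le) (sub_one_lt u)

theorem abs_setIntegral_mukIntegrand_le {n : ℕ} {u : ℝ} (hu : 1 < u) (v : ℝ) :
    |∫ t in Vk (n + 1) u v, mukIntegrand (n + 1) u t| ≤ log u ^ n / n ! := by
  have hlog : 0 ≤ log u ^ n / n ! := by have := log_nonneg hu.le; positivity
  calc |∫ t in Vk (n + 1) u v, mukIntegrand (n + 1) u t|
      ≤ (∫⁻ t in Vk (n + 1) u v, ENNReal.ofReal ‖mukIntegrand (n + 1) u t‖).toReal :=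
        Real.norm_eq_abs (∫ t in Vk (n + 1) u v, mukIntegrand (n + 1) u t) ▸
          norm_integral_le_lintegral_norm _
    _ ≤ (ENNReal.ofReal (log u ^ n / n !)).toReal :=
        ENNReal.toReal_mono ENNReal.ofReal_ne_top (setLIntegral_norm_mukIntegrand_le hu v)
    _ = log u ^ n / n ! := ENNReal.toReal_ofReal hlog

theorem muk_one_nonneg {u : ℝ} (hu : 0 < u) (v : ℝ) : 0 ≤ muk 1 u v := by
  rw [muk, if_pos rfl]
  positivity

theorem muk_one_le_inv {u : ℝ} (hu : 0 < u) (v : ℝ) : muk 1 u v ≤ u⁻¹ := by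
  rw [muk, if_pos rfl]
  refine mul_le_of_le_one_right (inv_nonneg.2 hu.le) ?_
  have : volume (Set.Ioo (0 : ℝ) 1 ∩ Set.Ioo (u - 1) (u - v)) ≤
      volume (Set.Ioo (0 : ℝ) 1) :=
    measure_mono Set.inter_subset_left
  simpa using ENNReal.toReal_mono (by simp) this

theorem muk_one_le_one {u v : ℝ} (hu : 0 < u) (hv : 0 ≤ v) : muk 1 u v ≤ 1 := by
  rw [muk, if_pos rfl, inv_mul_le_iff₀ hu, mul_one]
  have : volume (Set.Ioo (0 : ℝ) 1 ∩ Set.Ioo (u - 1) (u - v)) ≤ volume (Set.Ioo 0 u) :=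
    measure_mono fun x ⟨⟨hx, _⟩, ⟨_, hxv⟩⟩ => ⟨hx, by linarith⟩
  simpa [hu.le] using ENNReal.toReal_mono (by simp) this

theorem abs_muk_succ_le (k : ℕ) {u : ℝ} (hu : 1 < u) (v : ℝ) :
    |muk (k + 1) u v| ≤ u⁻¹ * (log u ^ k / k !) := by
  have hu0 : 0 < u := by linarith
  cases k with
  | zero => simpa [abs_of_nonneg (muk_one_nonneg hu0 v)] using muk_one_le_inv hu0 v
  | succ n =>
    rw [muk_of_ne_one (by omega), abs_mul, abs_inv, abs_of_pos hu0]
    exact mul_le_mul_of_nonneg_left (abs_setIntegral_mukIntegrand_le hu v) (by positivity)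

theorem Vk_eq_empty {u : ℝ} (hu : u ≤ 1) (k : ℕ) (v : ℝ) : Vk k u v = ∅ := by
  refine Set.eq_empty_of_forall_notMem fun t ⟨hIoo, hsum, _⟩ => ?_
  have := sum_nonneg fun i (_ : i ∈ univ.filter (fun i : Fin k => (i : ℕ) < k - 1)) =>
    (hIoo i).1.le
  linarith

theorem muk_eq_zero {k : ℕ} (hk : k ≠ 1) {u : ℝ} (hu : u ≤ 1) (v : ℝ) :
    muk k u v = 0 := by
  simp [muk_of_ne_one hk, Vk_eq_empty hu]

theorem mul_le_one_add_rpow {x κ : ℝ} (hx : 0 ≤ x) (hx1 : x ≤ 1) (hκ : 0 ≤ κ) :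
    κ * x ≤ (1 + x) ^ κ := by
  rcases le_total κ 1 with hκ1 | hκ1
  · calc κ * x ≤ 1 := mul_le_one₀ hκ1 hx hx1
      _ ≤ (1 + x) ^ κ := one_le_rpow (by linarith) hκ
  · calc κ * x ≤ 1 + κ * x := by linarith
      _ ≤ (1 + x) ^ κ := one_add_mul_self_le_rpow_one_add (by linarith) hκ1

theorem mul_inv_mul_rpow_le_one_add_rpow {u κ : ℝ} (hu : 1 ≤ u) (hκ : 0 ≤ κ) :
    κ * u⁻¹ * u ^ κ ≤ (1 + u) ^ κ := by
  have hu0 : 0 < u := by linarith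
  calc κ * u⁻¹ * u ^ κ ≤ (1 + u⁻¹) ^ κ * u ^ κ := by
        gcongr
        exact mul_le_one_add_rpow (by positivity) (inv_le_one_of_one_le₀ hu) hκ
    _ = (1 + u) ^ κ := by
        rw [← mul_rpow (by positivity) hu0.le, add_mul, inv_mul_cancel₀ hu0.ne', one_mul,
          add_comm]

theorem Real.tsum_pow_div_factorial (x : ℝ) : ∑' k : ℕ, x ^ k / k ! = exp x := by
  rw [Real.exp_eq_exp_ℝ, NormedSpace.exp_eq_tsum_div]

theorem norm_pow_mul_muk_succ_le (k : ℕ) {u κ : ℝ} (hu : 1 < u) (hκ : 0 ≤ κ) (v : ℝ) :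
    ‖κ ^ (k + 1) * muk (k + 1) u v‖ ≤ κ * u⁻¹ * ((κ * log u) ^ k / k !) := by
  rw [Real.norm_eq_abs, abs_mul, abs_pow, abs_of_nonneg hκ]
  calc κ ^ (k + 1) * |muk (k + 1) u v| ≤ κ ^ (k + 1) * (u⁻¹ * (log u ^ k / k !)) := by
        gcongr
        exact abs_muk_succ_le k hu v
    _ = κ * u⁻¹ * ((κ * log u) ^ k / k !) := by ring

theorem mukappa_summable_and_bounds_general (u v κ : ℝ) (hu : 0 < u) (hv0 : 0 ≤ v)
    (hκ : 0 < κ) :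
    Summable (fun k : ℕ => κ ^ (k+1) * muk (k+1) u v) ∧
    (u ≤ 1 → (∑' k : ℕ, κ ^ (k+1) * muk (k+1) u v) ≤ κ) ∧
    (1 < u → (∑' k : ℕ, κ ^ (k+1) * muk (k+1) u v) ≤ (1 + u) ^ κ) := by
  rcases le_or_gt u 1 with hu1 | hu1
  · have hzero : ∀ k ∉ range 1, κ ^ (k + 1) * muk (k + 1) u v = 0 := fun k hk => by
      rw [muk_eq_zero (by simp_all) hu1, mul_zero]
    refine ⟨summable_of_ne_finset_zero hzero, fun _ => ?_, fun h => absurd hu1 h.not_ge⟩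
    rw [tsum_eq_sum hzero, sum_range_one, zero_add, pow_one]
    exact mul_le_of_le_one_right hκ.le (muk_one_le_one hu hv0)
  · have hbound := fun k => norm_pow_mul_muk_succ_le k hu1 hκ.le v
    have hexp : Summable fun k : ℕ => κ * u⁻¹ * ((κ * log u) ^ k / k !) :=
      (summable_pow_div_factorial _).mul_left _
    have hsum := hexp.of_norm_bounded hbound
    refine ⟨hsum, fun h => absurd hu1 h.not_gt, fun _ => ?_⟩
    calc ∑' k, κ ^ (k + 1) * muk (k + 1) u v
        ≤ ∑' k : ℕ, κ * u⁻¹ * ((κ * log u) ^ k / k !) :=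
          hsum.tsum_le_tsum (fun k => (Real.le_norm_self _).trans (hbound k)) hexp
      _ = κ * u⁻¹ * u ^ κ := by
          rw [tsum_mul_left, tsum_pow_div_factorial, rpow_def_of_pos hu, mul_comm (log u)]
      _ ≤ (1 + u) ^ κ := mul_inv_mul_rpow_le_one_add_rpow hu1.le hκ.le

/-- Convergence and bounds for `∑_{k≥1} κ^k μ_k(u,v)` (Proposition 3.3). -/
theorem mukappa_summable_and_bounds (u v κ : ℝ) (hu : 0 < u) (hv0 : 0 ≤ v)
    (hv : v < min 1 u) (hκ : 0 < κ) :
    Summable (fun k : ℕ => κ ^ (k+1) * muk (k+1) u v) ∧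
    (u ≤ 1 → (∑' k : ℕ, κ ^ (k+1) * muk (k+1) u v) ≤ κ) ∧
    (1 < u → (∑' k : ℕ, κ ^ (k+1) * muk (k+1) u v) ≤ (1 + u) ^ κ) :=
  mukappa_summable_and_bounds_general u v κ hu hv0 hκ
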